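/- arXiv:1411.4477 — 2 statements merged into one kernel-verified Lean document; each statement's English description precedes it below -/
import Mathlib

section
/- Assume E|Z| < ∞ and Conditions 1 and 2, and define H(x) := I(x) − γ(x)F(x) and G(x) := H(x) + γ(x) = I(x) + γ(x)(1 − F(x)). Then H and G are nonnegative on (a,b), and for every Lipschitz-continuous test function h on the closure of (a,b) and every x in (a,b), the derivative of the standard solution (defined on the null set of non-differentiability via the Stein equation) satisfies |g_h'(x)| ≤ ‖h'‖ · ( (∫_a^x F(s) ds)·G(x) + (∫_x^b (1 − F(s)) ds)·H(x) ) / ( p(x)·η(x)² ). Moreover this bound is optimal among all bounds involving the factor ‖h'‖. -/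
open MeasureTheory Set Filter Topology

noncomputable section

/-- The open interval `(a,b)` with extended-real endpoints, viewed as a set of reals. -/
def ooE (a b : EReal) : Set ℝ := {x : ℝ | a < (x : EReal) ∧ (x : EReal) < b}

/-- The closed interval `[a,b] ∩ ℝ` (the closure of `(a,b)` in `ℝ`). -/
def ccE (a b : EReal) : Set ℝ := {x : ℝ | a ≤ (x : EReal) ∧ (x : EReal) ≤ b}

/-- The filter on `ℝ` of right-neighbourhoods of the (possibly infinite) endpoint `a`:
for finite `a` this is `𝓝[>] a`, for `a = ⊥` it is `atBot`. -/
def nhdsGT (a : EReal) : Filter ℝ :=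
  Filter.comap (fun x : ℝ => (x : EReal)) (nhdsWithin a (Set.Ioi a))

/-- The filter on `ℝ` of left-neighbourhoods of the (possibly infinite) endpoint `b`. -/
def nhdsLT (b : EReal) : Filter ℝ :=
  Filter.comap (fun x : ℝ => (x : EReal)) (nhdsWithin b (Set.Iio b))

/-- `f` is (locally) an indefinite integral of `f'` on `s`. -/
def IsLocACOn (f f' : ℝ → ℝ) (s : Set ℝ) : Prop :=
  ∀ x ∈ s, ∀ y ∈ s, IntervalIntegrable f' volume x y ∧ f y - f x = ∫ t in x..y, f' t

/-- `f` is locally absolutely continuous on `s`. -/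
def LocACOn (f : ℝ → ℝ) (s : Set ℝ) : Prop := ∃ f', IsLocACOn f f' s

/-- Condition 1: `p` is a probability density which is positive and locally absolutely
continuous on `(a,b)` and vanishes outside of `(a,b)`. -/
structure Cond1 (a b : EReal) (p : ℝ → ℝ) : Prop where
  lt : a < b
  meas : Measurable p
  nonneg : ∀ x, 0 ≤ p x
  pos : ∀ x ∈ ooE a b, 0 < p x
  zero : ∀ x, x ∉ ooE a b → p x = 0
  integrable : MeasureTheory.Integrable p
  total : ∫ x, p x = 1
  locAC : LocACOn p (ooE a b)

/-- Condition 2: `γ` is Borel measurable, not identically zero, decreasing on `[a,b]`,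
with `E|γ(Z)| < ∞` and `E[γ(Z)] = 0`. -/
structure Cond2 (a b : EReal) (p γ : ℝ → ℝ) : Prop where
  meas : Measurable γ
  ne_zero : ∃ x ∈ ccE a b, γ x ≠ 0
  anti : AntitoneOn γ (ccE a b)
  integrable : MeasureTheory.Integrable (fun x => γ x * p x)
  mean_zero : ∫ x, γ x * p x = 0

/-- `I(x) = ∫_a^x γ(t) p(t) dt` (the density vanishes outside `(a,b)`). -/
def Ifun (γ p : ℝ → ℝ) (x : ℝ) : ℝ := ∫ t in Iic x, γ t * p t

/-- The distribution function `F` of the density `p`. -/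
def Ffun (p : ℝ → ℝ) (x : ℝ) : ℝ := ∫ t in Iic x, p t

/-- `η = I/p`. -/
def etaFun (γ p : ℝ → ℝ) (x : ℝ) : ℝ := Ifun γ p x / p x

/-- `x₀ = sup {x ∈ (a,b) : γ(x) > 0}`. -/
def xZero (a b : EReal) (γ : ℝ → ℝ) : ℝ := sSup {x | x ∈ ooE a b ∧ 0 < γ x}

/-- `E[h(Z)]` for `Z` with density `p`. -/
def meanOf (p h : ℝ → ℝ) : ℝ := ∫ x, h x * p x

/-- The standard solution `g_h` of the Stein equation `η g' + γ g = h - E[h(Z)]`. -/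
def gsol (γ p h : ℝ → ℝ) (x : ℝ) : ℝ :=
  (∫ t in Iic x, (h t - meanOf p h) * p t) / (p x * etaFun γ p x)

/-- The derivative of the standard solution, defined everywhere via the Stein equation. -/
def gsol' (γ p h : ℝ → ℝ) (x : ℝ) : ℝ :=
  (h x - meanOf p h - γ x * gsol γ p h x) / etaFun γ p x

/-! ### Auxiliary lemmas -/

lemma ooE_subset_ccE (a b : EReal) : ooE a b ⊆ ccE a b :=
  fun x hx => ⟨le_of_lt hx.1, le_of_lt hx.2⟩

lemma mem_ooE_of_p_ne {a b : EReal} {p : ℝ → ℝ} (h1 : Cond1 a b p) {t : ℝ}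
    (ht : p t ≠ 0) : t ∈ ooE a b := by
  by_contra hc; exact ht (h1.zero t hc)

lemma fub1 (p : ℝ → ℝ) (hm : Measurable p) (hnn : ∀ t, 0 ≤ p t)
    (hint : Integrable p) (hmom : Integrable (fun t => t * p t)) (x : ℝ) :
    ∫ s in Iic x, (∫ t in Iic s, p t) = ∫ t in Iic x, (x - t) * p t := by
  have hFmono : Monotone (fun s => ∫ t in Iic s, p t) := by
    intro s₁ s₂ hs
    exact setIntegral_mono_set hint.integrableOn (ae_of_all _ hnn)
      ((Iic_subset_Iic.2 hs).eventuallyLE)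
  have hFnn : ∀ s, 0 ≤ ∫ t in Iic s, p t := fun s =>
    setIntegral_nonneg measurableSet_Iic fun t _ => hnn t
  have hrint : IntegrableOn (fun t => (x - t) * p t) (Iic x) := by
    have : Integrable (fun t => x * p t - t * p t) := (hint.const_mul x).sub hmom
    exact (this.congr (ae_of_all _ fun t => by ring)).integrableOn
  have hrnn : 0 ≤ ∫ t in Iic x, (x - t) * p t :=
    setIntegral_nonneg measurableSet_Iic fun t ht =>
      mul_nonneg (by simp at ht; linarith) (hnn t)
  have key : ∫⁻ s in Iic x, ENNReal.ofReal (∫ t in Iic s, p t)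
      = ENNReal.ofReal (∫ t in Iic x, (x - t) * p t) := by
    have step1 : ∀ s : ℝ, ENNReal.ofReal (∫ t in Iic s, p t)
        = ∫⁻ t, (Iic s).indicator (fun t => ENNReal.ofReal (p t)) t := by
      intro s
      rw [ofReal_integral_eq_lintegral_ofReal hint.integrableOn (ae_of_all _ hnn),
        ← lintegral_indicator measurableSet_Iic _]
    simp_rw [step1]
    rw [lintegral_lintegral_swap]
    · have inner : ∀ t : ℝ, (∫⁻ s in Iic x, (Iic s).indicator (fun t => ENNReal.ofReal (p t)) t)
          = ENNReal.ofReal (p t) * ENNReal.ofReal (x - t) := by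
        intro t
        have : (fun s => (Iic s).indicator (fun t => ENNReal.ofReal (p t)) t)
            = (Ici t).indicator (fun _ => ENNReal.ofReal (p t)) := by
          funext s
          by_cases h : t ≤ s
          · rw [indicator_of_mem (mem_Iic.2 h), indicator_of_mem (mem_Ici.2 h)]
          · rw [indicator_of_notMem (by simpa using h), indicator_of_notMem (by simpa using h)]
        rw [this, lintegral_indicator measurableSet_Ici _, lintegral_const,
          Measure.restrict_restrict measurableSet_Ici, Measure.restrict_apply_univ,
          Ici_inter_Iic, Real.volume_Icc]
      simp_rw [inner]
      have : (fun t => ENNReal.ofReal (p t) * ENNReal.ofReal (x - t))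
          = (Iic x).indicator (fun t => ENNReal.ofReal ((x - t) * p t)) := by
        funext t
        by_cases h : t ≤ x
        · rw [indicator_of_mem (mem_Iic.2 h),
            show (x - t) * p t = p t * (x - t) by ring, ENNReal.ofReal_mul (hnn t)]
        · rw [indicator_of_notMem (by simpa using h)]
          rw [ENNReal.ofReal_eq_zero.2 (by linarith : x - t ≤ 0), mul_zero]
      rw [this, lintegral_indicator measurableSet_Iic _,
        ← ofReal_integral_eq_lintegral_ofReal hrint
          (ae_restrict_of_forall_mem measurableSet_Iic fun t ht =>
            mul_nonneg (by simp at ht; linarith) (hnn t))]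
    · apply Measurable.aemeasurable
      have : (Function.uncurry fun s t => (Iic s).indicator (fun t => ENNReal.ofReal (p t)) t)
          = {q : ℝ × ℝ | q.2 ≤ q.1}.indicator (fun q => ENNReal.ofReal (p q.2)) := by
        funext q
        by_cases h : q.2 ≤ q.1
        · simp [Set.indicator, Function.uncurry, h]
        · simp [Set.indicator, Function.uncurry, h]
      rw [this]
      exact (ENNReal.measurable_ofReal.comp (hm.comp measurable_snd)).indicator
        (measurableSet_le measurable_snd measurable_fst)
  rw [integral_eq_lintegral_of_nonneg_ae (ae_of_all _ hFnn)
    (hFmono.measurable.aestronglyMeasurable), key, ENNReal.toReal_ofReal hrnn]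

lemma fub2 (p : ℝ → ℝ) (hm : Measurable p) (hnn : ∀ t, 0 ≤ p t)
    (hint : Integrable p) (hmom : Integrable (fun t => t * p t)) (x : ℝ) :
    ∫ s in Ioi x, (∫ t in Ioi s, p t) = ∫ t in Ioi x, (t - x) * p t := by
  have hFanti : Antitone (fun s => ∫ t in Ioi s, p t) := by
    intro s₁ s₂ hs
    exact setIntegral_mono_set hint.integrableOn (ae_of_all _ hnn)
      ((Ioi_subset_Ioi hs).eventuallyLE)
  have hFnn : ∀ s, 0 ≤ ∫ t in Ioi s, p t := fun s =>
    setIntegral_nonneg measurableSet_Ioi fun t _ => hnn t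
  have hrint : IntegrableOn (fun t => (t - x) * p t) (Ioi x) := by
    have : Integrable (fun t => t * p t - x * p t) := hmom.sub (hint.const_mul x)
    exact (this.congr (ae_of_all _ fun t => by ring)).integrableOn
  have hrnn : 0 ≤ ∫ t in Ioi x, (t - x) * p t :=
    setIntegral_nonneg measurableSet_Ioi fun t ht =>
      mul_nonneg (by simp at ht; linarith) (hnn t)
  have key : ∫⁻ s in Ioi x, ENNReal.ofReal (∫ t in Ioi s, p t)
      = ENNReal.ofReal (∫ t in Ioi x, (t - x) * p t) := by
    have step1 : ∀ s : ℝ, ENNReal.ofReal (∫ t in Ioi s, p t)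
        = ∫⁻ t, (Ioi s).indicator (fun t => ENNReal.ofReal (p t)) t := by
      intro s
      rw [ofReal_integral_eq_lintegral_ofReal hint.integrableOn (ae_of_all _ hnn),
        ← lintegral_indicator measurableSet_Ioi _]
    simp_rw [step1]
    rw [lintegral_lintegral_swap]
    · have inner : ∀ t : ℝ, (∫⁻ s in Ioi x, (Ioi s).indicator (fun t => ENNReal.ofReal (p t)) t)
          = ENNReal.ofReal (p t) * ENNReal.ofReal (t - x) := by
        intro t
        have : (fun s => (Ioi s).indicator (fun t => ENNReal.ofReal (p t)) t)
            = (Iio t).indicator (fun _ => ENNReal.ofReal (p t)) := by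
          funext s
          by_cases h : s < t
          · rw [indicator_of_mem (mem_Ioi.2 h), indicator_of_mem (mem_Iio.2 h)]
          · rw [indicator_of_notMem (by simpa using h), indicator_of_notMem (by simpa using h)]
        rw [this, lintegral_indicator measurableSet_Iio _, lintegral_const,
          Measure.restrict_restrict measurableSet_Iio, Measure.restrict_apply_univ,
          Iio_inter_Ioi, Real.volume_Ioo]
      simp_rw [inner]
      have : (fun t => ENNReal.ofReal (p t) * ENNReal.ofReal (t - x))
          = (Ioi x).indicator (fun t => ENNReal.ofReal ((t - x) * p t)) := by
        funext t
        by_cases h : x < t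
        · rw [indicator_of_mem (mem_Ioi.2 h),
            show (t - x) * p t = p t * (t - x) by ring, ENNReal.ofReal_mul (hnn t)]
        · rw [indicator_of_notMem (by simpa using h)]
          rw [ENNReal.ofReal_eq_zero.2 (by linarith : t - x ≤ 0), mul_zero]
      rw [this, lintegral_indicator measurableSet_Ioi _,
        ← ofReal_integral_eq_lintegral_ofReal hrint
          (ae_restrict_of_forall_mem measurableSet_Ioi fun t ht =>
            mul_nonneg (by simp at ht; linarith) (hnn t))]
    · apply Measurable.aemeasurable
      have : (Function.uncurry fun s t => (Ioi s).indicator (fun t => ENNReal.ofReal (p t)) t)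
          = {q : ℝ × ℝ | q.1 < q.2}.indicator (fun q => ENNReal.ofReal (p q.2)) := by
        funext q
        by_cases h : q.1 < q.2
        · simp [Set.indicator, Function.uncurry, h]
        · simp [Set.indicator, Function.uncurry, h]
      rw [this]
      exact (ENNReal.measurable_ofReal.comp (hm.comp measurable_snd)).indicator
        (measurableSet_lt measurable_fst measurable_snd)
  rw [integral_eq_lintegral_of_nonneg_ae (ae_of_all _ hFnn)
    (hFanti.measurable.aestronglyMeasurable), key, ENNReal.toReal_ofReal hrnn]

lemma tail_F {a b : EReal} {p : ℝ → ℝ} (h1 : Cond1 a b p) (x : ℝ) :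
    ∫ t in Ioi x, p t = 1 - Ffun p x := by
  have h := intervalIntegral.integral_Iic_add_Ioi (b := x) h1.integrable.integrableOn h1.integrable.integrableOn
  rw [h1.total] at h
  unfold Ffun; linarith

lemma tail_I {a b : EReal} {p γ : ℝ → ℝ} (h2 : Cond2 a b p γ) (x : ℝ) :
    ∫ t in Ioi x, γ t * p t = - Ifun γ p x := by
  have h := intervalIntegral.integral_Iic_add_Ioi (b := x) h2.integrable.integrableOn h2.integrable.integrableOn
  rw [h2.mean_zero] at h
  unfold Ifun; linarith

lemma H_repr {a b : EReal} {p γ : ℝ → ℝ} (h1 : Cond1 a b p) (h2 : Cond2 a b p γ) (x : ℝ) :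
    Ifun γ p x - γ x * Ffun p x = ∫ t in Iic x, (γ t - γ x) * p t := by
  rw [Ifun, Ffun, ← integral_const_mul,
    ← integral_sub h2.integrable.integrableOn ((h1.integrable.const_mul (γ x)).integrableOn)]
  exact integral_congr_ae (ae_of_all _ fun t => by ring)

lemma G_repr {a b : EReal} {p γ : ℝ → ℝ} (h1 : Cond1 a b p) (h2 : Cond2 a b p γ) (x : ℝ) :
    Ifun γ p x + γ x * (1 - Ffun p x) = ∫ t in Ioi x, (γ x - γ t) * p t := by
  have hI := tail_I h2 x
  have hF := tail_F h1 x
  have key : Ifun γ p x + γ x * (1 - Ffun p x)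
      = (∫ t in Ioi x, γ x * p t) - ∫ t in Ioi x, γ t * p t := by
    rw [integral_const_mul, hI, hF]; ring
  rw [key, ← integral_sub ((h1.integrable.const_mul (γ x)).integrableOn)
    h2.integrable.integrableOn]
  exact integral_congr_ae (ae_of_all _ fun t => by ring)

lemma H_nonneg {a b : EReal} {p γ : ℝ → ℝ} (h1 : Cond1 a b p) (h2 : Cond2 a b p γ)
    {x : ℝ} (hx : x ∈ ooE a b) : 0 ≤ Ifun γ p x - γ x * Ffun p x := by
  rw [H_repr h1 h2]
  refine setIntegral_nonneg measurableSet_Iic fun t ht => ?_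
  by_cases hp : p t = 0
  · simp [hp]
  · exact mul_nonneg (sub_nonneg.2 (h2.anti (ooE_subset_ccE a b (mem_ooE_of_p_ne h1 hp))
      (ooE_subset_ccE a b hx) ht)) (h1.nonneg t)

lemma G_nonneg {a b : EReal} {p γ : ℝ → ℝ} (h1 : Cond1 a b p) (h2 : Cond2 a b p γ)
    {x : ℝ} (hx : x ∈ ooE a b) : 0 ≤ Ifun γ p x + γ x * (1 - Ffun p x) := by
  rw [G_repr h1 h2]
  refine setIntegral_nonneg measurableSet_Ioi fun t ht => ?_
  by_cases hp : p t = 0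
  · simp [hp]
  · exact mul_nonneg (sub_nonneg.2 (h2.anti (ooE_subset_ccE a b hx)
      (ooE_subset_ccE a b (mem_ooE_of_p_ne h1 hp)) (le_of_lt ht))) (h1.nonneg t)

lemma hp_int {a b : EReal} {p : ℝ → ℝ} (h1 : Cond1 a b p)
    (hmom : Integrable (fun x => x * p x)) {h : ℝ → ℝ} {L : NNReal}
    (hL : LipschitzWith L h) : Integrable (fun t => h t * p t) := by
  refine Integrable.mono ((h1.integrable.const_mul |h 0|).add (hmom.abs.const_mul L))
    ((hL.continuous.measurable.mul h1.meas).aestronglyMeasurable) (ae_of_all _ fun t => ?_)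
  have hb : |h t| ≤ |h 0| + L * |t| := by
    have := hL.dist_le_mul t 0
    rw [Real.dist_eq, Real.dist_eq, sub_zero] at this
    calc |h t| = |h t - h 0 + h 0| := by ring_nf
      _ ≤ |h t - h 0| + |h 0| := abs_add_le _ _
      _ ≤ L * |t| + |h 0| := by linarith
      _ = |h 0| + L * |t| := by ring
  have hpt := h1.nonneg t
  rw [Real.norm_eq_abs, Real.norm_eq_abs, abs_mul]
  calc |h t| * |p t| = |h t| * p t := by rw [abs_of_nonneg hpt]
    _ ≤ (|h 0| + L * |t|) * p t := by nlinarith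
    _ = |h 0| * p t + L * (|t| * p t) := by ring
    _ ≤ |(|h 0| * p t + L * (|t| * p t))| := le_abs_self _
    _ = |(|h 0| * p t + L * |t * p t|)| := by rw [abs_mul, abs_of_nonneg hpt]

lemma gsol'_eq {a b : EReal} {p γ : ℝ → ℝ} (h1 : Cond1 a b p) (h2 : Cond2 a b p γ)
    {h : ℝ → ℝ} (hint : Integrable (fun t => h t * p t)) {x : ℝ} (hx : x ∈ ooE a b)
    (hI : Ifun γ p x ≠ 0) :
    gsol' γ p h x = p x * ((Ifun γ p x + γ x * (1 - Ffun p x)) * (∫ t in Iic x, (h x - h t) * p t)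
      + (Ifun γ p x - γ x * Ffun p x) * (∫ t in Ioi x, (h x - h t) * p t))
      / (Ifun γ p x) ^ 2 := by
  have hpx : 0 < p x := h1.pos x hx
  set E := meanOf p h with hEdef
  have hA : E = (∫ t in Iic x, h t * p t) + ∫ t in Ioi x, h t * p t := by
    rw [hEdef, meanOf]
    exact (intervalIntegral.integral_Iic_add_Ioi hint.integrableOn hint.integrableOn).symm
  have hT : (∫ t in Iic x, (h t - E) * p t)
      = (∫ t in Iic x, h t * p t) - E * Ffun p x := by
    rw [show (fun t => (h t - E) * p t) = fun t => h t * p t - E * p t from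
        funext fun t => by ring,
      integral_sub hint.integrableOn ((h1.integrable.const_mul E).integrableOn),
      integral_const_mul, Ffun]
  have hD1 : (∫ t in Iic x, (h x - h t) * p t)
      = h x * Ffun p x - ∫ t in Iic x, h t * p t := by
    rw [show (fun t => (h x - h t) * p t) = fun t => h x * p t - h t * p t from
        funext fun t => by ring,
      integral_sub ((h1.integrable.const_mul (h x)).integrableOn) hint.integrableOn,
      integral_const_mul, Ffun]
  have hD2 : (∫ t in Ioi x, (h x - h t) * p t)
      = h x * (1 - Ffun p x) - ∫ t in Ioi x, h t * p t := by
    rw [show (fun t => (h x - h t) * p t) = fun t => h x * p t - h t * p t from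
        funext fun t => by ring,
      integral_sub ((h1.integrable.const_mul (h x)).integrableOn) hint.integrableOn,
      integral_const_mul, tail_F h1]
  rw [gsol', gsol, etaFun, ← hEdef, hT, hD1, hD2, hA]
  field_simp
  ring



lemma minb_int {a b : EReal} {p : ℝ → ℝ} (h1 : Cond1 a b p)
    (hmom : Integrable (fun t => t * p t)) (x : ℝ) :
    IntegrableOn (fun t => (x - t) * p t) (Iic x) := by
  have : Integrable (fun t => x * p t - t * p t) := (h1.integrable.const_mul x).sub hmom
  exact (this.congr (ae_of_all _ fun t => by ring)).integrableOn

lemma minb_int' {a b : EReal} {p : ℝ → ℝ} (h1 : Cond1 a b p)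
    (hmom : Integrable (fun t => t * p t)) (x : ℝ) :
    IntegrableOn (fun t => (t - x) * p t) (Ioi x) := by
  have : Integrable (fun t => t * p t - x * p t) := hmom.sub (h1.integrable.const_mul x)
  exact (this.congr (ae_of_all _ fun t => by ring)).integrableOn

lemma hM1 {a b : EReal} {p : ℝ → ℝ} (h1 : Cond1 a b p)
    (hmom : Integrable (fun t => t * p t)) (x : ℝ) :
    ∫ s in Iic x, Ffun p s = ∫ t in Iic x, (x - t) * p t := by
  simp only [Ffun]
  exact fub1 p h1.meas h1.nonneg h1.integrable hmom x

lemma hM2 {a b : EReal} {p : ℝ → ℝ} (h1 : Cond1 a b p)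
    (hmom : Integrable (fun t => t * p t)) (x : ℝ) :
    ∫ s in Ioi x, (1 - Ffun p s) = ∫ t in Ioi x, (t - x) * p t := by
  have : ∫ s in Ioi x, (1 - Ffun p s) = ∫ s in Ioi x, (∫ t in Ioi s, p t) :=
    integral_congr_ae (ae_of_all _ fun s => (tail_F h1 s).symm)
  rw [this]
  exact fub2 p h1.meas h1.nonneg h1.integrable hmom x

lemma core_bound {a b : EReal} {p γ : ℝ → ℝ} (h1 : Cond1 a b p) (h2 : Cond2 a b p γ)
    (hmom : Integrable (fun t => t * p t)) {h : ℝ → ℝ} {L : NNReal}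
    (hL : LipschitzWith L h) {x : ℝ} (hx : x ∈ ooE a b) :
    |gsol' γ p h x| ≤
      L * ((∫ s in Iic x, Ffun p s) * (Ifun γ p x + γ x * (1 - Ffun p x)) +
           (∫ s in Ioi x, (1 - Ffun p s)) * (Ifun γ p x - γ x * Ffun p x)) /
        (p x * (etaFun γ p x) ^ 2) := by
  by_cases hI : Ifun γ p x = 0
  · simp [gsol', gsol, etaFun, hI]
  have hpx : 0 < p x := h1.pos x hx
  have hH := H_nonneg h1 h2 hx
  have hG := G_nonneg h1 h2 hx
  have hint := hp_int h1 hmom hL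
  rw [gsol'_eq h1 h2 hint hx hI]
  set G := Ifun γ p x + γ x * (1 - Ffun p x)
  set H := Ifun γ p x - γ x * Ffun p x
  set D1 := ∫ t in Iic x, (h x - h t) * p t
  set D2 := ∫ t in Ioi x, (h x - h t) * p t
  set M1 := ∫ t in Iic x, (x - t) * p t with hM1def
  set M2 := ∫ t in Ioi x, (t - x) * p t with hM2def
  have hb1 : |D1| ≤ L * M1 := by
    calc |D1| ≤ ∫ t in Iic x, |h x - h t| * |p t| := by
          simpa [Real.norm_eq_abs] using
            norm_integral_le_integral_norm (μ := volume.restrict (Iic x))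
              (fun t => (h x - h t) * p t)
      _ ≤ ∫ t in Iic x, L * ((x - t) * p t) := by
          refine integral_mono_of_nonneg (ae_of_all _ fun t => mul_nonneg (abs_nonneg _) (abs_nonneg _))
            ((minb_int h1 hmom x).const_mul _)
            (ae_restrict_of_forall_mem measurableSet_Iic fun t ht => ?_)
          dsimp only
          have hd := hL.dist_le_mul x t
          rw [Real.dist_eq, Real.dist_eq] at hd
          have htx : t ≤ x := ht
          have : |h x - h t| ≤ L * (x - t) := by
            calc |h x - h t| ≤ L * |x - t| := hd
              _ = L * (x - t) := by rw [abs_of_nonneg (by linarith)]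
          rw [abs_of_nonneg (h1.nonneg t)]
          calc |h x - h t| * p t ≤ (L * (x - t)) * p t :=
                mul_le_mul_of_nonneg_right this (h1.nonneg t)
            _ = L * ((x - t) * p t) := by ring
      _ = L * M1 := by rw [integral_const_mul, hM1def]
  have hb2 : |D2| ≤ L * M2 := by
    calc |D2| ≤ ∫ t in Ioi x, |h x - h t| * |p t| := by
          simpa [Real.norm_eq_abs] using
            norm_integral_le_integral_norm (μ := volume.restrict (Ioi x))
              (fun t => (h x - h t) * p t)
      _ ≤ ∫ t in Ioi x, L * ((t - x) * p t) := by
          refine integral_mono_of_nonneg (ae_of_all _ fun t => mul_nonneg (abs_nonneg _) (abs_nonneg _))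
            ((minb_int' h1 hmom x).const_mul _)
            (ae_restrict_of_forall_mem measurableSet_Ioi fun t ht => ?_)
          dsimp only
          have hd := hL.dist_le_mul x t
          rw [Real.dist_eq, Real.dist_eq] at hd
          have htx : x < t := ht
          have : |h x - h t| ≤ L * (t - x) := by
            calc |h x - h t| ≤ L * |x - t| := hd
              _ = L * (t - x) := by rw [abs_of_nonpos (by linarith : x - t ≤ 0)]; ring_nf
          rw [abs_of_nonneg (h1.nonneg t)]
          calc |h x - h t| * p t ≤ (L * (t - x)) * p t :=
                mul_le_mul_of_nonneg_right this (h1.nonneg t)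
            _ = L * ((t - x) * p t) := by ring
      _ = L * M2 := by rw [integral_const_mul, hM2def]
  have hNbound : |G * D1 + H * D2| ≤ L * (M1 * G + M2 * H) := by
    calc |G * D1 + H * D2| ≤ |G * D1| + |H * D2| := abs_add_le _ _
      _ = G * |D1| + H * |D2| := by rw [abs_mul, abs_mul, abs_of_nonneg hG, abs_of_nonneg hH]
      _ ≤ G * (L * M1) + H * (L * M2) :=
          add_le_add (mul_le_mul_of_nonneg_left hb1 hG) (mul_le_mul_of_nonneg_left hb2 hH)
      _ = L * (M1 * G + M2 * H) := by ring
  have hIsq : (0:ℝ) < (Ifun γ p x) ^ 2 := by positivity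
  have hden : L * ((∫ s in Iic x, Ffun p s) * G + (∫ s in Ioi x, (1 - Ffun p s)) * H) /
      (p x * (etaFun γ p x) ^ 2) = p x * (L * (M1 * G + M2 * H)) / (Ifun γ p x) ^ 2 := by
    rw [hM1 h1 hmom x, hM2 h1 hmom x, ← hM1def, ← hM2def, etaFun]
    field_simp
  rw [hden, abs_div, abs_mul, abs_of_nonneg hpx.le, abs_pow, sq_abs]
  exact div_le_div_of_nonneg_right (mul_le_mul_of_nonneg_left hNbound hpx.le) hIsq.le



lemma lip_neg_abs (x : ℝ) : LipschitzWith 1 (fun t : ℝ => -|t - x|) := by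
  rw [lipschitzWith_iff_dist_le_mul]
  intro u v
  simp only [Real.dist_eq, NNReal.coe_one, one_mul]
  have h1 : (fun t : ℝ => -|t - x|) u - (fun t : ℝ => -|t - x|) v
      = |v - x| - |u - x| := by dsimp only; ring
  rw [h1]
  have h2 := abs_abs_sub_abs_le_abs_sub (v - x) (u - x)
  have h3 : v - x - (u - x) = -(u - v) := by ring
  rw [h3, abs_neg] at h2
  exact h2

lemma core_eq {a b : EReal} {p γ : ℝ → ℝ} (h1 : Cond1 a b p) (h2 : Cond2 a b p γ)
    (hmom : Integrable (fun t => t * p t)) {x : ℝ} (hx : x ∈ ooE a b) :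
    |gsol' γ p (fun t => -|t - x|) x| =
      ((∫ s in Iic x, Ffun p s) * (Ifun γ p x + γ x * (1 - Ffun p x)) +
       (∫ s in Ioi x, (1 - Ffun p s)) * (Ifun γ p x - γ x * Ffun p x)) /
        (p x * (etaFun γ p x) ^ 2) := by
  set h : ℝ → ℝ := fun t => -|t - x| with hdef
  by_cases hI : Ifun γ p x = 0
  · simp [gsol', gsol, etaFun, hI]
  have hpx : 0 < p x := h1.pos x hx
  have hH := H_nonneg h1 h2 hx
  have hG := G_nonneg h1 h2 hx
  have hint := hp_int h1 hmom (lip_neg_abs x)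
  rw [gsol'_eq h1 h2 hint hx hI]
  have hD1 : (∫ t in Iic x, (h x - h t) * p t) = ∫ t in Iic x, (x - t) * p t := by
    refine setIntegral_congr_fun measurableSet_Iic fun t ht => ?_
    have htx : t ≤ x := ht
    simp only [hdef, sub_self, abs_zero, neg_zero, sub_neg_eq_add, zero_add]
    rw [abs_of_nonpos (by linarith : t - x ≤ 0)]
    ring
  have hD2 : (∫ t in Ioi x, (h x - h t) * p t) = ∫ t in Ioi x, (t - x) * p t := by
    refine setIntegral_congr_fun measurableSet_Ioi fun t ht => ?_
    have htx : x < t := ht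
    simp only [hdef, sub_self, abs_zero, neg_zero, sub_neg_eq_add, zero_add]
    rw [abs_of_nonneg (by linarith : 0 ≤ t - x)]
  rw [hD1, hD2, hM1 h1 hmom x, hM2 h1 hmom x]
  have hm1 : 0 ≤ ∫ t in Iic x, (x - t) * p t :=
    setIntegral_nonneg measurableSet_Iic fun t ht =>
      mul_nonneg (by simp at ht; linarith) (h1.nonneg t)
  have hm2 : 0 ≤ ∫ t in Ioi x, (t - x) * p t :=
    setIntegral_nonneg measurableSet_Ioi fun t ht =>
      mul_nonneg (by simp at ht; linarith) (h1.nonneg t)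
  set G := Ifun γ p x + γ x * (1 - Ffun p x)
  set H := Ifun γ p x - γ x * Ffun p x
  set M1 := ∫ t in Iic x, (x - t) * p t
  set M2 := ∫ t in Ioi x, (t - x) * p t
  have hnum : 0 ≤ G * M1 + H * M2 :=
    add_nonneg (mul_nonneg hG hm1) (mul_nonneg hH hm2)
  have hIsq : (0:ℝ) < (Ifun γ p x) ^ 2 := by positivity
  rw [abs_of_nonneg (by positivity)]
  rw [etaFun]
  field_simp




/-- `H(x) = I(x) - γ(x)F(x)` and `G(x) = I(x) + γ(x)(1-F(x))` are nonnegative on `(a,b)`,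
and for Lipschitz `h` the derivative of the standard solution satisfies the optimal bound
`|g_h'(x)| ≤ ‖h'‖ ((∫_a^x F) G(x) + (∫_x^b (1-F)) H(x)) / (p(x) η(x)²)`. -/
theorem prop_gsol_deriv_lipschitz_bound (a b : EReal) (p γ : ℝ → ℝ)
    (h1 : Cond1 a b p) (h2 : Cond2 a b p γ)
    (hmom : MeasureTheory.Integrable (fun x => x * p x)) :
    (∀ x ∈ ooE a b, 0 ≤ Ifun γ p x - γ x * Ffun p x) ∧
    (∀ x ∈ ooE a b, 0 ≤ Ifun γ p x + γ x * (1 - Ffun p x)) ∧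
    (∀ (h : ℝ → ℝ) (L : NNReal), LipschitzOnWith L h (ccE a b) →
      ∀ x ∈ ooE a b,
        |gsol' γ p h x| ≤
          L * ((∫ s in Iic x, Ffun p s) * (Ifun γ p x + γ x * (1 - Ffun p x)) +
               (∫ s in Ioi x, (1 - Ffun p s)) * (Ifun γ p x - γ x * Ffun p x)) /
            (p x * (etaFun γ p x) ^ 2)) ∧
    (∀ x ∈ ooE a b, ∃ h : ℝ → ℝ, LipschitzOnWith 1 h (ccE a b) ∧
      |gsol' γ p h x| =
        ((∫ s in Iic x, Ffun p s) * (Ifun γ p x + γ x * (1 - Ffun p x)) +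
         (∫ s in Ioi x, (1 - Ffun p s)) * (Ifun γ p x - γ x * Ffun p x)) /
          (p x * (etaFun γ p x) ^ 2)) := by
  refine ⟨fun x hx => H_nonneg h1 h2 hx, fun x hx => G_nonneg h1 h2 hx, ?_, ?_⟩
  · intro h L hL x hx
    obtain ⟨g, hg, hEq⟩ := hL.extend_real
    have hcong : ∀ t, h t * p t = g t * p t := by
      intro t
      by_cases ht : t ∈ ccE a b
      · rw [hEq ht]
      · rw [h1.zero t (fun hc => ht (ooE_subset_ccE a b hc)), mul_zero, mul_zero]
    have hmean : meanOf p h = meanOf p g := by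
      rw [meanOf, meanOf]
      exact integral_congr_ae (ae_of_all _ hcong)
    have hgsol : gsol γ p h x = gsol γ p g x := by
      rw [gsol, gsol, hmean]
      congr 1
      exact integral_congr_ae (ae_of_all _ fun t => by dsimp only; rw [sub_mul, sub_mul, hcong t])
    have hgs' : gsol' γ p h x = gsol' γ p g x := by
      rw [gsol', gsol', hmean, hgsol, hEq (ooE_subset_ccE a b hx)]
    rw [hgs']
    exact core_bound h1 h2 hmom hg hx
  · intro x hx
    exact ⟨fun t => -|t - x|, (lip_neg_abs x).lipschitzOnWith, core_eq h1 h2 hmom hx⟩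


end
end

section
/- Assume Conditions 1 and 2, let W and W' be identically distributed square-integrable random variables with values in an interval J with (a,b) ⊆ J ⊆ closure of (a,b) on which γ and η are defined, with E|γ(W)| < ∞, and suppose that for some constant λ > 0 and remainder terms R and S one has (1/λ)·E[W' − W | W] = γ(W) + R and (1/(2λ))·E[(W' − W)² | W] = η(W) + S. Then for every bounded, continuously differentiable function f : J → ℝ which is Lipschitz-continuous with Lipschitz-continuous derivative f', one has |E[η(W)f'(W) + γ(W)f(W)]| ≤ (‖f''‖/(6λ))·E[|W' − W|³] + ‖f‖·E|R| + ‖f'‖·E|S|, where ‖f''‖ denotes the minimum Lipschitz constant of f'. -/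
open MeasureTheory Set Filter Topology

noncomputable section

/-! Let `F` be a primitive of `f`. Taylor's formula with the Lipschitz bound on `f'` gives
`F(W') - F(W) = f(W) (W' - W) + f'(W) (W' - W)² / 2 + r` with `|r| ≤ ‖f''‖ |W' - W|³ / 6`.
As `W` and `W'` have the same law, `E[F(W') - F(W)] = 0`. Conditioning the two middle terms
on `W` and inserting the regression identities turns them into
`λ E[f(W) (γ(W) + R)] + λ E[f'(W) (η(W) + S)]`, and the bound follows on dividing by `λ`. -/

theorem ordConnected_of_ooE_subset_of_subset_ccE {a b : EReal} {J : Set ℝ}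
    (hJ1 : ooE a b ⊆ J) (hJ2 : J ⊆ ccE a b) : J.OrdConnected := by
  refine ⟨fun x hx y hy t ht => ?_⟩
  rcases ht.1.eq_or_lt with rfl | hxt
  · exact hx
  rcases ht.2.eq_or_lt with rfl | hty
  · exact hy
  exact hJ1 ⟨(hJ2 hx).1.trans_lt (EReal.coe_lt_coe_iff.2 hxt),
    (EReal.coe_lt_coe_iff.2 hty).trans_le (hJ2 hy).2⟩

theorem abs_intervalIntegral_le_of_abs_le_mul_pow {g : ℝ → ℝ} {x y C : ℝ} {n : ℕ} (hC : 0 ≤ C)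
    (hg : ∀ t ∈ uIcc x y, |g t| ≤ C * |t - x| ^ n) :
    |∫ t in x..y, g t| ≤ C * |y - x| ^ (n + 1) / (n + 1) := by
  have hmaj : IntervalIntegrable (fun t => C * |t - x| ^ n) volume x y :=
    (by fun_prop : Continuous fun t => C * |t - x| ^ n).intervalIntegrable x y
  calc |∫ t in x..y, g t| ≤ |∫ t in x..y, C * |t - x| ^ n| :=
        (Real.norm_eq_abs _).ge.trans <| intervalIntegral.norm_integral_le_abs_of_norm_le
          ((ae_restrict_iff' measurableSet_uIoc).2 <| ae_of_all _ fun t ht =>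
            hg t (uIoc_subset_uIcc ht)) hmaj
    _ = C * |y - x| ^ (n + 1) / (n + 1) := by
        rw [intervalIntegral.abs_integral_eq_abs_integral_uIoc, integral_const_mul,
          integral_pow_abs_sub_uIoc, abs_of_nonneg (by positivity), mul_div_assoc]

section Taylor

variable {J : Set ℝ} {f f' : ℝ → ℝ} {x y : ℝ}

theorem Set.OrdConnected.sub_eq_intervalIntegral_of_hasDerivWithinAt (hJ : J.OrdConnected)
    (hf : ∀ x ∈ J, HasDerivWithinAt f (f' x) J x) (hf' : ContinuousOn f' J)
    (hx : x ∈ J) (hy : y ∈ J) : f y - f x = ∫ t in x..y, f' t := by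
  have hxy : uIcc x y ⊆ J := hJ.uIcc_subset hx hy
  refine (intervalIntegral.integral_eq_sub_of_hasDeriv_right
    (fun t ht => (hf t (hxy ht)).continuousWithinAt.mono hxy) (fun t ht => ?_)
    ((hf'.mono hxy).intervalIntegrable)).symm
  have hJt : J ∈ 𝓝 t :=
    mem_of_superset (isOpen_Ioo.mem_nhds ht) (Ioo_subset_Icc_self.trans hxy)
  exact (hf t (hxy (Ioo_subset_Icc_self ht))).mono_of_mem_nhdsWithin
    (mem_nhdsWithin_of_mem_nhds hJt)

variable {K : NNReal}

theorem abs_sub_sub_mul_le_of_lipschitzOnWith (hJ : J.OrdConnected)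
    (hf : ∀ x ∈ J, HasDerivWithinAt f (f' x) J x) (hf' : LipschitzOnWith K f' J)
    (hx : x ∈ J) (hy : y ∈ J) :
    |f y - f x - f' x * (y - x)| ≤ K * (y - x) ^ 2 / 2 := by
  have hxy : uIcc x y ⊆ J := hJ.uIcc_subset hx hy
  have hrepr : f y - f x - f' x * (y - x) = ∫ t in x..y, (f' t - f' x) := by
    rw [hJ.sub_eq_intervalIntegral_of_hasDerivWithinAt hf hf'.continuousOn hx hy,
      intervalIntegral.integral_sub ((hf'.continuousOn.mono hxy).intervalIntegrable)
        intervalIntegrable_const, intervalIntegral.integral_const, smul_eq_mul, mul_comm]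
  rw [hrepr]
  have := abs_intervalIntegral_le_of_abs_le_mul_pow (n := 1) K.coe_nonneg fun t ht => by
    simpa only [pow_one, Real.dist_eq] using hf'.dist_le_mul t (hxy ht) x hx
  norm_num at this
  exact this

theorem abs_intervalIntegral_sub_taylor_le (hJ : J.OrdConnected)
    (hf : ∀ x ∈ J, HasDerivWithinAt f (f' x) J x) (hf' : LipschitzOnWith K f' J)
    (hx : x ∈ J) (hy : y ∈ J) :
    |(∫ t in x..y, f t) - f x * (y - x) - f' x * (y - x) ^ 2 / 2| ≤ K * |y - x| ^ 3 / 6 := by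
  have hxy : uIcc x y ⊆ J := hJ.uIcc_subset hx hy
  have hfc : ContinuousOn f J := fun t ht => (hf t ht).continuousWithinAt
  have hlin : ∫ t in x..y, (f x + f' x * (t - x)) = f x * (y - x) + f' x * (y - x) ^ 2 / 2 := by
    rw [intervalIntegral.integral_add intervalIntegrable_const
      ((by fun_prop : Continuous fun t => f' x * (t - x)).intervalIntegrable _ _)]
    simp
    ring
  have hrepr : (∫ t in x..y, f t) - f x * (y - x) - f' x * (y - x) ^ 2 / 2
      = ∫ t in x..y, (f t - f x - f' x * (t - x)) := by
    rw [sub_sub, ← hlin, ← intervalIntegral.integral_sub ((hfc.mono hxy).intervalIntegrable)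
      ((by fun_prop : Continuous fun t => f x + f' x * (t - x)).intervalIntegrable x y)]
    simp only [sub_sub]
  rw [hrepr]
  have := abs_intervalIntegral_le_of_abs_le_mul_pow (n := 2)
    (div_nonneg K.coe_nonneg zero_le_two) fun t ht =>
      (abs_sub_sub_mul_le_of_lipschitzOnWith hJ hf hf' hx (hxy ht)).trans_eq (by rw [sq_abs]; ring)
  norm_num at this
  linarith

end Taylor

theorem Set.OrdConnected.exists_lipschitzWith_primitive {J : Set ℝ} {f : ℝ → ℝ}
    (hJ : J.OrdConnected) (hf : ContinuousOn f J) {M : ℝ} (hM : ∀ x ∈ J, |f x| ≤ M) :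
    ∃ F : ℝ → ℝ, LipschitzWith M.toNNReal F ∧ F 0 = 0 ∧
      ∀ x ∈ J, ∀ y ∈ J, F y - F x = ∫ t in x..y, f t := by
  have hbound : ∀ t, ‖J.indicator f t‖ ≤ M.toNNReal := fun t => by
    by_cases ht : t ∈ J
    · simpa [ht] using (hM t ht).trans (le_max_left M 0)
    · simp [ht]
  have hmeas : AEStronglyMeasurable (J.indicator f) volume :=
    (aestronglyMeasurable_indicator_iff hJ.measurableSet).2
      (hf.aestronglyMeasurable hJ.measurableSet)
  have hint (x y : ℝ) : IntervalIntegrable (J.indicator f) volume x y :=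
    intervalIntegrable_const.mono_fun' hmeas.restrict (ae_of_all _ hbound)
  refine ⟨fun x => ∫ t in 0..x, J.indicator f t, LipschitzWith.of_dist_le_mul fun x y => ?_,
    intervalIntegral.integral_same, fun x hx y hy => ?_⟩
  · rw [Real.dist_eq, Real.dist_eq,
      intervalIntegral.integral_interval_sub_left (hint 0 x) (hint 0 y), ← Real.norm_eq_abs]
    exact intervalIntegral.norm_integral_le_of_norm_le_const fun t _ => hbound t
  · rw [intervalIntegral.integral_interval_sub_left (hint 0 y) (hint 0 x)]
    exact intervalIntegral.integral_congr fun t ht =>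
      indicator_of_mem (hJ.uIcc_subset hx hy ht) f

section Probability

variable {Ω : Type*} {mΩ : MeasurableSpace Ω} {μ : Measure Ω} {J : Set ℝ}
  {W W' X Y Z : Ω → ℝ} {h f f' : ℝ → ℝ} {M Mf Mf' : ℝ} {K : NNReal}

theorem ContinuousOn.measurable_comp_of_mapsTo {m : MeasurableSpace Ω} (hh : ContinuousOn h J)
    (hW : Measurable[m] W) (hWJ : ∀ ω, W ω ∈ J) : Measurable[m] fun ω => h (W ω) :=
  hh.domRestrict.measurable.comp (hW.subtype_mk (h := hWJ))

theorem ContinuousOn.integrable_comp_mul (hh : ContinuousOn h J) (hM : ∀ x ∈ J, |h x| ≤ M)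
    (hW : Measurable W) (hWJ : ∀ ω, W ω ∈ J) (hX : Integrable X μ) :
    Integrable (fun ω => h (W ω) * X ω) μ :=
  hX.bdd_mul (hh.measurable_comp_of_mapsTo hW hWJ).aestronglyMeasurable
    (ae_of_all _ fun ω => hM _ (hWJ ω))

theorem abs_integral_comp_mul_le (hM : ∀ x ∈ J, |h x| ≤ M) (hWJ : ∀ ω, W ω ∈ J)
    (hX : Integrable X μ) : |∫ ω, h (W ω) * X ω ∂μ| ≤ M * ∫ ω, |X ω| ∂μ := by
  rw [← integral_const_mul]
  refine abs_integral_le_integral_abs.trans (integral_mono_of_nonneg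
    (ae_of_all _ fun ω => abs_nonneg _) (hX.abs.const_mul M) (ae_of_all _ fun ω => ?_))
  dsimp only
  rw [abs_mul]
  exact mul_le_mul_of_nonneg_right (hM _ (hWJ ω)) (abs_nonneg _)

theorem ContinuousOn.integral_comp_mul_eq_of_condExp_eq [IsFiniteMeasure μ]
    (hh : ContinuousOn h J) (hM : ∀ x ∈ J, |h x| ≤ M) (hW : Measurable W) (hWJ : ∀ ω, W ω ∈ J)
    (hX : Integrable X μ) (hY : Integrable Y μ) (hZ : Integrable Z μ) {c : ℝ}
    (hcond : μ[X | MeasurableSpace.comap W inferInstance] =ᵐ[μ] fun ω => c * (Y ω + Z ω)) :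
    ∫ ω, h (W ω) * X ω ∂μ = c * (∫ ω, h (W ω) * Y ω ∂μ + ∫ ω, h (W ω) * Z ω ∂μ) := by
  have hhW : StronglyMeasurable[MeasurableSpace.comap W inferInstance] fun ω => h (W ω) :=
    (hh.measurable_comp_of_mapsTo (comap_measurable W) hWJ).stronglyMeasurable
  calc ∫ ω, h (W ω) * X ω ∂μ
      = ∫ ω, (μ[(fun ω => h (W ω)) * X | MeasurableSpace.comap W inferInstance]) ω ∂μ :=
        (integral_condExp hW.comap_le).symm
    _ = ∫ ω, h (W ω) * (c * (Y ω + Z ω)) ∂μ := by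
        refine integral_congr_ae ?_
        filter_upwards [condExp_mul_of_stronglyMeasurable_left hhW
          (hh.integrable_comp_mul hM hW hWJ hX) hX, hcond] with ω hω hω'
        rw [hω, Pi.mul_apply, hω']
    _ = c * (∫ ω, h (W ω) * Y ω ∂μ + ∫ ω, h (W ω) * Z ω ∂μ) := by
        rw [← integral_add (hh.integrable_comp_mul hM hW hWJ hY)
          (hh.integrable_comp_mul hM hW hWJ hZ), ← integral_const_mul]
        congr with ω
        ring

theorem ofReal_abs_integral_taylor_le [IsFiniteMeasure μ] (hJ : J.OrdConnected)
    (hW : Measurable W) (hWW' : ProbabilityTheory.IdentDistrib W W' μ μ) (hW2 : MemLp W 2 μ)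
    (hWJ : ∀ ω, W ω ∈ J) (hW'J : ∀ ω, W' ω ∈ J)
    (hf : ∀ x ∈ J, HasDerivWithinAt f (f' x) J x) (hf' : LipschitzOnWith K f' J)
    (hMf : ∀ x ∈ J, |f x| ≤ Mf) (hMf' : ∀ x ∈ J, |f' x| ≤ Mf') :
    ENNReal.ofReal |∫ ω, f (W ω) * (W' ω - W ω) ∂μ + (∫ ω, f' (W ω) * (W' ω - W ω) ^ 2 ∂μ) / 2|
      ≤ ENNReal.ofReal (K / 6) * ∫⁻ ω, ENNReal.ofReal (|W' ω - W ω| ^ 3) ∂μ := by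
  have hfc : ContinuousOn f J := fun x hx => (hf x hx).continuousWithinAt
  obtain ⟨F, hFlip, hF0, hF⟩ := hJ.exists_lipschitzWith_primitive hfc hMf
  have hW'2 : MemLp W' 2 μ := hWW'.memLp_snd hW2
  have hFW : Integrable (fun ω => F (W ω)) μ :=
    (hFlip.comp_memLp hF0 hW2).integrable one_le_two
  have hFW' : Integrable (fun ω => F (W' ω)) μ :=
    (hWW'.comp hFlip.continuous.measurable).integrable_snd hFW
  have hfD : Integrable (fun ω => f (W ω) * (W' ω - W ω)) μ :=
    hfc.integrable_comp_mul hMf hW hWJ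
      ((hW'2.integrable one_le_two).sub (hW2.integrable one_le_two))
  have hf'D : Integrable (fun ω => f' (W ω) * (W' ω - W ω) ^ 2) μ :=
    hf'.continuousOn.integrable_comp_mul hMf' hW hWJ (hW'2.sub hW2).integrable_sq
  have hFD : Integrable (fun ω => F (W' ω) - F (W ω)) μ := hFW'.sub hFW
  have hFDf : Integrable (fun ω => F (W' ω) - F (W ω) - f (W ω) * (W' ω - W ω)) μ :=
    hFD.sub hfD
  have hf'D2 : Integrable (fun ω => f' (W ω) * (W' ω - W ω) ^ 2 / 2) μ := hf'D.div_const 2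
  have hFF : ∫ ω, F (W' ω) ∂μ = ∫ ω, F (W ω) ∂μ :=
    (hWW'.comp hFlip.continuous.measurable).integral_eq.symm
  have hrem : ∫ ω, f (W ω) * (W' ω - W ω) ∂μ + (∫ ω, f' (W ω) * (W' ω - W ω) ^ 2 ∂μ) / 2
      = -∫ ω, (F (W' ω) - F (W ω) - f (W ω) * (W' ω - W ω)
          - f' (W ω) * (W' ω - W ω) ^ 2 / 2) ∂μ := by
    rw [integral_sub hFDf hf'D2, integral_sub hFD hfD, integral_sub hFW' hFW, integral_div, hFF]
    ring
  rw [hrem, abs_neg, ← Real.enorm_eq_ofReal_abs]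
  calc _ ≤ ∫⁻ ω, ‖F (W' ω) - F (W ω) - f (W ω) * (W' ω - W ω)
          - f' (W ω) * (W' ω - W ω) ^ 2 / 2‖ₑ ∂μ := enorm_integral_le_lintegral_enorm _
    _ ≤ ∫⁻ ω, ENNReal.ofReal (K / 6) * ENNReal.ofReal (|W' ω - W ω| ^ 3) ∂μ := by
        refine lintegral_mono fun ω => ?_
        rw [Real.enorm_eq_ofReal_abs, ← ENNReal.ofReal_mul (by positivity)]
        refine ENNReal.ofReal_le_ofReal ?_
        rw [hF _ (hWJ ω) _ (hW'J ω)]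
        linarith [abs_intervalIntegral_sub_taylor_le hJ hf hf' (hWJ ω) (hW'J ω)]
    _ = _ := lintegral_const_mul' _ _ ENNReal.ofReal_ne_top

end Probability

theorem ofReal_abs_add_le_of_abs_mul_add_le {lam A B r s u v c : ℝ} {L : ENNReal}
    (hlam : 0 < lam)
    (hT : ENNReal.ofReal |lam * (A + r) + lam * (B + s)| ≤ ENNReal.ofReal c * L)
    (hr : |r| ≤ u) (hs : |s| ≤ v) :
    ENNReal.ofReal |A + B| ≤
      ENNReal.ofReal (c / lam) * L + ENNReal.ofReal u + ENNReal.ofReal v := by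
  set T := lam * (A + r) + lam * (B + s)
  have hAB : |A + B| ≤ |T| / lam + u + v := by
    have : A + B = T / lam - r - s := by field_simp; ring
    rw [this, ← abs_of_pos hlam, ← abs_div, abs_of_pos hlam]
    linarith [abs_sub (T / lam - r) s, abs_sub (T / lam) r]
  calc ENNReal.ofReal |A + B|
      ≤ ENNReal.ofReal (|T| / lam) + ENNReal.ofReal u + ENNReal.ofReal v :=
        (ENNReal.ofReal_le_ofReal hAB).trans
          (ENNReal.ofReal_add_le.trans (by gcongr; exact ENNReal.ofReal_add_le))
    _ ≤ ENNReal.ofReal c * L * ENNReal.ofReal lam⁻¹ + ENNReal.ofReal u + ENNReal.ofReal v := by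
        rw [div_eq_mul_inv, ENNReal.ofReal_mul (abs_nonneg _)]
        gcongr
    _ = _ := by rw [mul_right_comm, ← ENNReal.ofReal_mul' (inv_nonneg.2 hlam.le), div_eq_mul_inv]

theorem prop_plugin_general
    {Ω : Type*} [MeasurableSpace Ω] (μ : Measure Ω) [IsProbabilityMeasure μ]
    (a b : EReal) (p γ : ℝ → ℝ)
    (J : Set ℝ) (hJ1 : ooE a b ⊆ J) (hJ2 : J ⊆ ccE a b)
    (W W' : Ω → ℝ) (hWm : Measurable W) (hW'm : Measurable W')
    (hid : μ.map W = μ.map W')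
    (hW2 : MeasureTheory.MemLp W 2 μ)
    (hWval : ∀ ω, W ω ∈ J) (hW'val : ∀ ω, W' ω ∈ J)
    (hγW : MeasureTheory.Integrable (fun ω => γ (W ω)) μ)
    (lam : ℝ) (hlam : 0 < lam)
    (R S : Ω → ℝ)
    (hR : MeasureTheory.Integrable R μ) (hS : MeasureTheory.Integrable S μ)
    (hreg1 : μ[(fun ω => W' ω - W ω) | MeasurableSpace.comap W inferInstance] =ᵐ[μ]
      fun ω => lam * (γ (W ω) + R ω))
    (hreg2 : μ[(fun ω => (W' ω - W ω) ^ 2) | MeasurableSpace.comap W inferInstance] =ᵐ[μ]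
      fun ω => 2 * lam * (etaFun γ p (W ω) + S ω))
    (f f' : ℝ → ℝ)
    (hf : ∀ x ∈ J, HasDerivWithinAt f (f' x) J x)
    (Mf Mf' : ℝ) (Mf'' : NNReal)
    (hMf : ∀ x ∈ J, |f x| ≤ Mf)
    (hMf' : ∀ x ∈ J, |f' x| ≤ Mf')
    (hf'' : LipschitzOnWith Mf'' f' J) :
    ENNReal.ofReal |∫ ω, (etaFun γ p (W ω) * f' (W ω) + γ (W ω) * f (W ω)) ∂μ| ≤
      ENNReal.ofReal ((Mf'' : ℝ) / (6 * lam)) *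
          ∫⁻ ω, ENNReal.ofReal (|W' ω - W ω| ^ 3) ∂μ +
        ENNReal.ofReal (Mf * ∫ ω, |R ω| ∂μ) +
        ENNReal.ofReal (Mf' * ∫ ω, |S ω| ∂μ) := by
  have hJ := ordConnected_of_ooE_subset_of_subset_ccE hJ1 hJ2
  have hfc : ContinuousOn f J := fun x hx => (hf x hx).continuousWithinAt
  have hWW' : ProbabilityTheory.IdentDistrib W W' μ μ :=
    ⟨hWm.aemeasurable, hW'm.aemeasurable, hid⟩
  have hW'2 : MemLp W' 2 μ := hWW'.memLp_snd hW2
  -- `η(W) + S` is a multiple of a conditional expectation.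
  have hηW : Integrable (fun ω => etaFun γ p (W ω)) μ :=
    (((integrable_const_mul_iff (by positivity : 2 * lam ≠ 0).isUnit _).1
      (integrable_condExp.congr hreg2)).sub hS).congr
        (ae_of_all _ fun ω => add_sub_cancel_right _ _)
  have hfD := hfc.integral_comp_mul_eq_of_condExp_eq (X := fun ω => W' ω - W ω) hMf hWm hWval
    ((hW'2.integrable one_le_two).sub (hW2.integrable one_le_two)) hγW hR hreg1
  have hf'D := hf''.continuousOn.integral_comp_mul_eq_of_condExp_eq
    (X := fun ω => (W' ω - W ω) ^ 2) hMf' hWm hWval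
    (hW'2.sub hW2).integrable_sq hηW hS hreg2
  have hT := ofReal_abs_integral_taylor_le hJ hWm hWW' hW2 hWval hW'val hf hf'' hMf hMf'
  rw [hfD, hf'D, mul_assoc, mul_div_cancel_left₀ _ two_ne_zero] at hT
  have hsum : ∫ ω, (etaFun γ p (W ω) * f' (W ω) + γ (W ω) * f (W ω)) ∂μ
      = ∫ ω, f (W ω) * γ (W ω) ∂μ + ∫ ω, f' (W ω) * etaFun γ p (W ω) ∂μ := by
    simp_rw [mul_comm (etaFun γ p _), mul_comm (γ _)]
    rw [integral_add (hf''.continuousOn.integrable_comp_mul hMf' hWm hWval hηW)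
      (hfc.integrable_comp_mul hMf hWm hWval hγW), add_comm]
  rw [hsum, ← div_div]
  exact ofReal_abs_add_le_of_abs_mul_add_le hlam hT (abs_integral_comp_mul_le hMf hWval hR)
    (abs_integral_comp_mul_le hMf' hWval hS)

/-- Abstract exchangeable-pairs plug-in result: if `(W,W')` are identically distributed,
square-integrable, with values in `J`, `(a,b) ⊆ J ⊆ [a,b]`, and satisfy the two regression
properties with remainders `R` and `S`, then for every bounded, continuously differentiable,
Lipschitz `f` with Lipschitz derivative `f'`,
`|E[η(W)f'(W) + γ(W)f(W)]| ≤ ‖f''‖/(6λ) E|W'-W|³ + ‖f‖ E|R| + ‖f'‖ E|S|`. -/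
theorem prop_plugin
    {Ω : Type*} [MeasurableSpace Ω] (μ : Measure Ω) [IsProbabilityMeasure μ]
    (a b : EReal) (p γ : ℝ → ℝ) (h1 : Cond1 a b p) (h2 : Cond2 a b p γ)
    (J : Set ℝ) (hJ1 : ooE a b ⊆ J) (hJ2 : J ⊆ ccE a b)
    (W W' : Ω → ℝ) (hWm : Measurable W) (hW'm : Measurable W')
    (hid : μ.map W = μ.map W')
    (hW2 : MeasureTheory.MemLp W 2 μ)
    (hWval : ∀ ω, W ω ∈ J) (hW'val : ∀ ω, W' ω ∈ J)
    (hγW : MeasureTheory.Integrable (fun ω => γ (W ω)) μ)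
    (lam : ℝ) (hlam : 0 < lam)
    (R S : Ω → ℝ)
    (hR : MeasureTheory.Integrable R μ) (hS : MeasureTheory.Integrable S μ)
    (hreg1 : μ[(fun ω => W' ω - W ω) | MeasurableSpace.comap W inferInstance] =ᵐ[μ]
      fun ω => lam * (γ (W ω) + R ω))
    (hreg2 : μ[(fun ω => (W' ω - W ω) ^ 2) | MeasurableSpace.comap W inferInstance] =ᵐ[μ]
      fun ω => 2 * lam * (etaFun γ p (W ω) + S ω))
    (f f' : ℝ → ℝ)
    (hf : ∀ x ∈ J, HasDerivWithinAt f (f' x) J x)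
    (hf'cont : ContinuousOn f' J)
    (Mf Mf' : ℝ) (Mf'' : NNReal)
    (hMf : ∀ x ∈ J, |f x| ≤ Mf)
    (hMf' : ∀ x ∈ J, |f' x| ≤ Mf')
    (hf'' : LipschitzOnWith Mf'' f' J) :
    ENNReal.ofReal |∫ ω, (etaFun γ p (W ω) * f' (W ω) + γ (W ω) * f (W ω)) ∂μ| ≤
      ENNReal.ofReal ((Mf'' : ℝ) / (6 * lam)) *
          ∫⁻ ω, ENNReal.ofReal (|W' ω - W ω| ^ 3) ∂μ +
        ENNReal.ofReal (Mf * ∫ ω, |R ω| ∂μ) +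
        ENNReal.ofReal (Mf' * ∫ ω, |S ω| ∂μ) :=
  prop_plugin_general μ a b p γ J hJ1 hJ2 W W' hWm hW'm hid hW2 hWval hW'val hγW lam hlam R S hR hS
    hreg1 hreg2 f f' hf Mf Mf' Mf'' hMf hMf' hf''
end
end
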